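/- arXiv:2008.04183 — 5 statements merged into one kernel-verified Lean document; each statement's English description precedes it below -/
import Mathlib

section
/- If R : V → V satisfies R(v) ≤ v and R(v) ~ v for every vertex v, then the updated map satisfies T_R(v) ≤ R(v) and T_R(v) ~ v for every vertex v; consequently, every iterate (T_R)^[k] also satisfies these two properties (it is pointwise ≤ the identity and maps every vertex into its own connected component). -/
open scoped Classical in
/-- The update map `T_R`: `upd G R v` is the minimum of the finite nonempty set
`{R v} ∪ {R b : ∃ a, a adjacent to b and R a = R v}`. -/
noncomputable def upd {V : Type*} [Fintype V] [LinearOrder V] (G : SimpleGraph V)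
    (R : V → V) (v : V) : V :=
  (insert (R v) ((Finset.univ.filter fun b => ∃ a, G.Adj a b ∧ R a = R v).image R)).min'
    (Finset.insert_nonempty _ _)

theorem SimpleGraph.reachable_iterate_apply {V : Type*} {G : SimpleGraph V} {f : V → V}
    (h : ∀ v, G.Reachable (f v) v) (k : ℕ) (v : V) : G.Reachable (f^[k] v) v := by
  induction k with
  | zero => exact .refl v
  | succ k ih => exact (Function.iterate_succ_apply' f k v ▸ h _).trans ih

section upd

variable {V : Type*} [Fintype V] [LinearOrder V] (G : SimpleGraph V) (R : V → V)

theorem upd_le (v : V) : upd G R v ≤ R v :=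
  Finset.min'_le _ _ (Finset.mem_insert_self _ _)

theorem upd_eq_or_exists_adj (v : V) :
    upd G R v = R v ∨ ∃ a b, G.Adj a b ∧ R a = R v ∧ upd G R v = R b := by
  classical
  have hmem := Finset.min'_mem
    (insert (R v) ((Finset.univ.filter fun b => ∃ a, G.Adj a b ∧ R a = R v).image R))
    (Finset.insert_nonempty _ _)
  simp only [Finset.mem_insert, Finset.mem_image, Finset.mem_filter, Finset.mem_univ,
    true_and] at hmem
  rcases hmem with hself | ⟨b, ⟨a, hab, hRa⟩, hRb⟩
  · exact .inl hself
  · exact .inr ⟨a, b, hab, hRa, hRb.symm⟩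

variable {G R}

theorem reachable_upd (hreach : ∀ v, G.Reachable (R v) v) (v : V) :
    G.Reachable (upd G R v) v := by
  rcases upd_eq_or_exists_adj G R v with hself | ⟨a, b, hab, hRa, hRb⟩
  · exact hself ▸ hreach v
  · rw [hRb]
    exact (hreach b).trans <| hab.symm.reachable.trans <| (hreach a).symm.trans (hRa ▸ hreach v)

end upd

theorem stmt1_general {V : Type*} [Fintype V] [LinearOrder V] (G : SimpleGraph V)
    (R : V → V)
    (hle : ∀ v, R v ≤ v)
    (hreach : ∀ v, G.Reachable (R v) v) :
    (∀ v, upd G R v ≤ R v ∧ G.Reachable (upd G R v) v) ∧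
    (∀ k v, (upd G R)^[k] v ≤ v ∧ G.Reachable ((upd G R)^[k] v) v) := by
  have hupd_le_id : upd G R ≤ id := fun v => (upd_le G R v).trans (hle v)
  exact ⟨fun v => ⟨upd_le G R v, reachable_upd hreach v⟩, fun k v =>
    ⟨Function.iterate_le_id_of_le_id hupd_le_id k v,
      SimpleGraph.reachable_iterate_apply (reachable_upd hreach) k v⟩⟩

theorem stmt1 {V : Type*} [Fintype V] [Nonempty V] [LinearOrder V] (G : SimpleGraph V)
    (R : V → V)
    (hle : ∀ v, R v ≤ v)
    (hreach : ∀ v, G.Reachable (R v) v) :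
    (∀ v, upd G R v ≤ R v ∧ G.Reachable (upd G R v) v) ∧
    (∀ k v, (upd G R)^[k] v ≤ v ∧ G.Reachable ((upd G R)^[k] v) v) :=
  stmt1_general G R hle hreach
end

section
/- (Correctness of the connected-components iteration) The sequence R_0, R_1, R_2, … is pointwise non-increasing and eventually constant, and its eventual value is the component-minimum map: there exists K such that R_k = ρ for all k ≥ K. -/
open scoped Classical in
/-- The component-minimum map: `rho G v` is the least element of the
connected component of `v`. -/
noncomputable def rho {V : Type*} [Fintype V] [LinearOrder V] (G : SimpleGraph V) (v : V) : V :=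
  (Finset.univ.filter fun w => G.Reachable w v).min'
    ⟨v, Finset.mem_filter.mpr ⟨Finset.mem_univ v, SimpleGraph.Reachable.refl v⟩⟩

/-- The algorithm's iteration: `R_0 = id`, `R_{k+1} = (T_{R_k})^[card V]`. -/
noncomputable def Rseq {V : Type*} [Fintype V] [LinearOrder V] (G : SimpleGraph V) :
    ℕ → V → V
  | 0 => id
  | k + 1 => (upd G (Rseq G k))^[Fintype.card V]

/-!
Every `R_k` is a *labeling*: it moves each vertex down to a vertex of its own component.
Hence the `R_k` decrease pointwise, and being an antitone sequence in the finite poset `V → V`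
they stabilise at some `R_K`. Then `R_{K+1} = R_K` forces `T_{R_K} = R_K`, so `R_K` is
monotone along edges, hence constant on components; a labeling that is constant on components
and lies below the identity is the component minimum.
-/

theorem Function.iterate_le_apply_of_le_id {α : Type*} [Preorder α] {f : α → α} (hf : f ≤ id)
    {n : ℕ} (hn : n ≠ 0) (x : α) : f^[n] x ≤ f x := by
  obtain ⟨m, rfl⟩ := Nat.exists_eq_succ_of_ne_zero hn
  exact Function.iterate_le_id_of_le_id hf m (f x)

namespace SimpleGraph

variable {V : Type*} [LinearOrder V] (G : SimpleGraph V)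

structure IsLabeling (R : V → V) : Prop where
  le_self : ∀ v, R v ≤ v
  reachable : ∀ v, G.Reachable (R v) v

namespace IsLabeling

variable {G}

theorem id : G.IsLabeling id :=
  ⟨fun _ => le_rfl, fun _ => Reachable.rfl⟩

theorem comp {R S : V → V} (hR : G.IsLabeling R) (hS : G.IsLabeling S) :
    G.IsLabeling (R ∘ S) :=
  ⟨fun v => (hR.le_self (S v)).trans (hS.le_self v),
    fun v => (hR.reachable (S v)).trans (hS.reachable v)⟩

theorem iterate {R : V → V} (hR : G.IsLabeling R) (n : ℕ) : G.IsLabeling R^[n] := by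
  induction n with
  | zero => exact IsLabeling.id
  | succ n ih => rw [Function.iterate_succ']; exact hR.comp ih

end IsLabeling

variable [Fintype V]

theorem rho_le_of_reachable {v w : V} (h : G.Reachable w v) : rho G v ≤ w :=
  Finset.min'_le _ _ (by simpa using h)

theorem reachable_rho (v : V) : G.Reachable (rho G v) v := by
  have h : rho G v ∈ _ := Finset.min'_mem _ _
  simpa using h

theorem upd_le (R : V → V) (v : V) : upd G R v ≤ R v :=
  Finset.min'_le _ _ (Finset.mem_insert_self _ _)

theorem upd_eq_or_exists (R : V → V) (v : V) :
    upd G R v = R v ∨ ∃ a b, G.Adj a b ∧ R a = R v ∧ upd G R v = R b := by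
  have h : upd G R v ∈ _ := Finset.min'_mem _ _
  simp only [Finset.mem_insert, Finset.mem_image, Finset.mem_filter, Finset.mem_univ,
    true_and] at h
  rcases h with h | ⟨b, ⟨a, hab, ha⟩, hb⟩
  · exact Or.inl h
  · exact Or.inr ⟨a, b, hab, ha, hb.symm⟩

theorem upd_le_of_adj (R : V → V) {a b : V} (hab : G.Adj a b) : upd G R a ≤ R b :=
  Finset.min'_le _ _ (Finset.mem_insert_of_mem (by simp only [Finset.mem_image,
    Finset.mem_filter, Finset.mem_univ, true_and]; exact ⟨b, ⟨a, hab, rfl⟩, rfl⟩))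

theorem isLabeling_upd {R : V → V} (hR : G.IsLabeling R) : G.IsLabeling (upd G R) := by
  refine ⟨fun v => (upd_le G R v).trans (hR.le_self v), fun v => ?_⟩
  rcases upd_eq_or_exists G R v with h | ⟨a, b, hab, ha, h⟩
  · exact h ▸ hR.reachable v
  · rw [h]
    exact (hR.reachable b).trans (hab.symm.reachable.trans ((hR.reachable a).symm.trans
      (ha ▸ hR.reachable v)))

theorem apply_eq_of_reachable_of_upd_eq {R : V → V} (hfix : upd G R = R) {u v : V}
    (h : G.Reachable u v) : R u = R v := by
  obtain ⟨p⟩ := h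
  induction p with
  | nil => rfl
  | cons hadj _ ih =>
    refine le_antisymm ?_ ?_ |>.trans ih
    · simpa only [hfix] using upd_le_of_adj G R hadj
    · simpa only [hfix] using upd_le_of_adj G R hadj.symm

theorem IsLabeling.eq_rho_of_upd_eq {R : V → V} (hR : G.IsLabeling R) (hfix : upd G R = R) :
    R = rho G := by
  funext v
  refine le_antisymm ?_ (rho_le_of_reachable G (hR.reachable v))
  calc R v = R (rho G v) := (apply_eq_of_reachable_of_upd_eq G hfix (reachable_rho G v)).symm
    _ ≤ rho G v := hR.le_self _

theorem isLabeling_Rseq (k : ℕ) : G.IsLabeling (Rseq G k) := by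
  induction k with
  | zero => exact IsLabeling.id
  | succ k ih => exact (isLabeling_upd G ih).iterate _

theorem Rseq_succ_le_upd (k : ℕ) (v : V) : Rseq G (k + 1) v ≤ upd G (Rseq G k) v :=
  Function.iterate_le_apply_of_le_id (isLabeling_upd G (isLabeling_Rseq G k)).le_self
    (Fintype.card_pos_iff.mpr ⟨v⟩).ne' v

theorem Rseq_succ_le (k : ℕ) (v : V) : Rseq G (k + 1) v ≤ Rseq G k v :=
  (Rseq_succ_le_upd G k v).trans (upd_le G _ v)

theorem upd_Rseq_eq_of_Rseq_succ_eq {k : ℕ} (h : Rseq G (k + 1) = Rseq G k) :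
    upd G (Rseq G k) = Rseq G k :=
  funext fun v => le_antisymm (upd_le G _ v) (h ▸ Rseq_succ_le_upd G k v)

end SimpleGraph

theorem stmt3_general {V : Type*} [Fintype V] [LinearOrder V] (G : SimpleGraph V) :
    (∀ k v, Rseq G (k + 1) v ≤ Rseq G k v) ∧
    (∃ K, ∀ k, K ≤ k → Rseq G k = rho G) := by
  refine ⟨SimpleGraph.Rseq_succ_le G, ?_⟩
  obtain ⟨K, hK⟩ := WellFoundedLT.antitone_chain_condition
    (antitone_nat_of_succ_le (f := Rseq G) fun k => SimpleGraph.Rseq_succ_le G k)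
  have hrho : Rseq G K = rho G := (SimpleGraph.isLabeling_Rseq G K).eq_rho_of_upd_eq G
    (SimpleGraph.upd_Rseq_eq_of_Rseq_succ_eq G (hK (K + 1) K.le_succ).symm)
  exact ⟨K, fun k hk => (hK k hk).symm.trans hrho⟩

theorem stmt3 {V : Type*} [Fintype V] [Nonempty V] [LinearOrder V] (G : SimpleGraph V) :
    (∀ k v, Rseq G (k + 1) v ≤ Rseq G k v) ∧
    (∃ K, ∀ k, K ≤ k → Rseq G k = rho G) :=
  stmt3_general G
end

section
/- (Two-iteration merging claim) For every k ≥ 0 and every vertex v, if the R_k-class of v is not its entire connected component (i.e., there exists u with u ~ v and R_k(u) ≠ R_k(v)), then within two further iterations the class of v merges with another class: there exists a vertex w with R_k(w) ≠ R_k(v) and R_{k+2}(w) = R_{k+2}(v). -/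
/-!
Write `R = R_k` and `f = T_R`. Since `f ≤ R ≤ id`, iterating `f` `card V` times reaches a fixed
point, so `R_{k+1} v` is a fixed point of `f`; and `f v` depends only on `R v`, so `R_{k+1}` is
constant on `R`-classes. If `f v < R v`, the minimum is attained at a neighbour `b` of the class
of `v` with `R b ≠ R v`, and `R_{k+1} b = R_{k+1} (f v) = R_{k+1} v`. Otherwise `R_{k+1} v = R v`;
take an edge `a b` leaving the class of `v` (it exists since the class is not the whole
component). Then `R_{k+1} b ≤ f b ≤ R a = R_{k+1} v`: either `b` already merges with `v`, or the
inequality is strict and the first case applies one level up.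
-/

theorem Function.isFixedPt_iterate_card_of_le_id {α : Type*} [Fintype α] [PartialOrder α]
    {f : α → α} (hf : f ≤ id) (x : α) : IsFixedPt f (f^[Fintype.card α] x) := by
  by_contra hx
  have hmoves (i : ℕ) (hi : i ≤ Fintype.card α) : f (f^[i] x) < f^[i] x :=
    (hf _).lt_of_ne fun h => hx <| by
      rwa [← Nat.sub_add_cancel hi, iterate_add_apply, IsFixedPt.iterate h]
  have hanti : StrictAnti fun i : Fin (Fintype.card α + 1) => f^[i] x :=
    Fin.strictAnti_iff_succ_lt.2 fun i => by
      simpa only [Fin.val_succ, Fin.val_castSucc, iterate_succ_apply'] using hmoves i i.is_le'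
  simpa using Fintype.card_le_of_injective _ hanti.injective

section

variable {V : Type*} [Fintype V] [LinearOrder V] (G : SimpleGraph V)

theorem upd_le_self (R : V → V) (v : V) : upd G R v ≤ R v :=
  Finset.min'_le _ _ (Finset.mem_insert_self _ _)

theorem upd_congr (R : V → V) {x v : V} (h : R x = R v) : upd G R x = upd G R v := by
  classical
  unfold upd
  simp only [h]

theorem upd_le_of_adj (R : V → V) {v a b : V} (hab : G.Adj a b) (ha : R a = R v) :
    upd G R v ≤ R b := by
  classical
  exact Finset.min'_le _ _ <| Finset.mem_insert_of_mem <| Finset.mem_image_of_mem R <|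
    Finset.mem_filter.2 ⟨Finset.mem_univ b, a, hab, ha⟩

theorem upd_eq_self_or_exists_adj (R : V → V) (v : V) :
    upd G R v = R v ∨ ∃ a b, G.Adj a b ∧ R a = R v ∧ upd G R v = R b := by
  classical
  unfold upd
  rcases Finset.mem_insert.1 (Finset.min'_mem _ (Finset.insert_nonempty (R v) _)) with h | h
  · exact Or.inl h
  · obtain ⟨b, hb, hbv⟩ := Finset.mem_image.1 h
    obtain ⟨-, a, hab, ha⟩ := Finset.mem_filter.1 hb
    exact Or.inr ⟨a, b, hab, ha, hbv.symm⟩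

theorem Rseq_le_id (k : ℕ) : Rseq G k ≤ id := by
  induction k with
  | zero => intro v; exact le_rfl
  | succ k ih =>
    exact Function.iterate_le_id_of_le_id (fun x => (upd_le_self G _ x).trans (ih x)) _

theorem upd_Rseq_le_id (k : ℕ) : upd G (Rseq G k) ≤ id :=
  fun x => (upd_le_self G _ x).trans (Rseq_le_id G k x)

theorem isFixedPt_upd_Rseq_succ (k : ℕ) (v : V) :
    Function.IsFixedPt (upd G (Rseq G k)) (Rseq G (k + 1) v) :=
  Function.isFixedPt_iterate_card_of_le_id (upd_Rseq_le_id G k) v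

theorem Rseq_idem (k : ℕ) (v : V) : Rseq G k (Rseq G k v) = Rseq G k v := by
  cases k with
  | zero => rfl
  | succ k => exact (isFixedPt_upd_Rseq_succ G k v).iterate _

theorem Rseq_succ_eq_iterate_upd (k : ℕ) (v : V) :
    Rseq G (k + 1) v =
      (upd G (Rseq G k))^[Fintype.card V - 1] (upd G (Rseq G k) v) := by
  have : 0 < Fintype.card V := Fintype.card_pos_iff.2 ⟨v⟩
  rw [← Function.iterate_succ_apply, Nat.succ_eq_add_one, Nat.sub_add_cancel this]
  rfl

theorem Rseq_succ_congr {k : ℕ} {x v : V} (h : Rseq G k x = Rseq G k v) :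
    Rseq G (k + 1) x = Rseq G (k + 1) v := by
  rw [Rseq_succ_eq_iterate_upd, Rseq_succ_eq_iterate_upd, upd_congr G _ h]

theorem Rseq_succ_le_upd (k : ℕ) (v : V) : Rseq G (k + 1) v ≤ upd G (Rseq G k) v := by
  rw [Rseq_succ_eq_iterate_upd]
  exact Function.iterate_le_id_of_le_id (upd_Rseq_le_id G k) _ _

theorem Rseq_succ_eq_of_upd_eq {k : ℕ} {v : V} (h : upd G (Rseq G k) v = Rseq G k v) :
    Rseq G (k + 1) v = Rseq G k v := by
  have hfix : Function.IsFixedPt (upd G (Rseq G k)) (Rseq G k v) :=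
    (upd_congr G _ (Rseq_idem G k v)).trans h
  rw [Rseq_succ_eq_iterate_upd, h, hfix.iterate]

theorem Rseq_succ_upd (k : ℕ) (v : V) :
    Rseq G (k + 1) (upd G (Rseq G k) v) = Rseq G (k + 1) v := by
  change (upd G (Rseq G k))^[_] _ = _
  rw [← Function.iterate_succ_apply, Function.iterate_succ_apply']
  exact isFixedPt_upd_Rseq_succ G k v

theorem exists_Rseq_succ_eq_of_upd_lt {k : ℕ} {v : V}
    (h : upd G (Rseq G k) v < Rseq G k v) :
    ∃ w, Rseq G k w ≠ Rseq G k v ∧ Rseq G (k + 1) w = Rseq G (k + 1) v := by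
  obtain hv | ⟨a, b, -, -, hb⟩ := upd_eq_self_or_exists_adj G (Rseq G k) v
  · exact absurd hv h.ne
  refine ⟨b, hb ▸ h.ne, ?_⟩
  calc Rseq G (k + 1) b = Rseq G (k + 1) (Rseq G k b) := Rseq_succ_congr G (Rseq_idem G k b).symm
    _ = Rseq G (k + 1) v := by rw [← hb, Rseq_succ_upd]

end

theorem stmt4_general {V : Type*} [Fintype V] [LinearOrder V] (G : SimpleGraph V) :
    ∀ (k : ℕ) (v : V),
      (∃ u, G.Reachable u v ∧ Rseq G k u ≠ Rseq G k v) →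
      ∃ w, Rseq G k w ≠ Rseq G k v ∧ Rseq G (k + 2) w = Rseq G (k + 2) v := by
  rintro k v ⟨u, ⟨p⟩, hne⟩
  rcases (upd_le_self G (Rseq G k) v).lt_or_eq with hlt | hfix
  · obtain ⟨w, hw, hwv⟩ := exists_Rseq_succ_eq_of_upd_lt G hlt
    exact ⟨w, hw, Rseq_succ_congr G hwv⟩
  obtain ⟨d, -, ha, hb⟩ := p.reverse.exists_boundary_dart {x | Rseq G k x = Rseq G k v} rfl hne
  have hbv : Rseq G (k + 1) d.snd ≤ Rseq G (k + 1) v := calc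
    Rseq G (k + 1) d.snd ≤ upd G (Rseq G k) d.snd := Rseq_succ_le_upd G k _
    _ ≤ Rseq G k d.fst := upd_le_of_adj G _ d.adj.symm rfl
    _ = Rseq G (k + 1) v := ha.trans (Rseq_succ_eq_of_upd_eq G hfix).symm
  rcases hbv.lt_or_eq with hlt | heq
  · have hup : upd G (Rseq G (k + 1)) v < Rseq G (k + 1) v :=
      (upd_le_of_adj G _ d.adj (Rseq_succ_congr G ha)).trans_lt hlt
    obtain ⟨w, hw, hwv⟩ := exists_Rseq_succ_eq_of_upd_lt G hup
    exact ⟨w, fun h => hw (Rseq_succ_congr G h), hwv⟩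
  · exact ⟨d.snd, hb, Rseq_succ_congr G heq⟩

theorem stmt4 {V : Type*} [Fintype V] [Nonempty V] [LinearOrder V] (G : SimpleGraph V) :
    ∀ (k : ℕ) (v : V),
      (∃ u, G.Reachable u v ∧ Rseq G k u ≠ Rseq G k v) →
      ∃ w, Rseq G k w ≠ Rseq G k v ∧ Rseq G (k + 2) w = Rseq G (k + 2) v :=
  stmt4_general G
end

section
/- (Iteration bound, Lemma 1) Let N be the maximum, over the connected components C of G, of the number of edges of G with both endpoints in C. Then for every k ≥ 2 · ⌈log₂(N + 1)⌉, the iterate R_k equals the component-minimum map ρ; that is, the iterative merging process finds all connected components after at most 2 · ⌈log₂(N + 1)⌉ iterations. -/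
open scoped Classical in
/-- The maximum, over the connected components `C` of `G`, of the number of
edges of `G` with both endpoints in `C`. -/
noncomputable def Nmax {V : Type*} [Fintype V] [LinearOrder V] (G : SimpleGraph V) : ℕ :=
  Finset.univ.sup fun c : G.ConnectedComponent =>
    (G.edgeFinset.filter fun e => ∀ x ∈ e, G.connectedComponentMk x = c).card

/-!
Call `R` a representative map if it is idempotent, decreasing and sends every vertex into its own
component; its fixed points in a component are the roots of that component. A phase
`R ↦ (T_R)^∞` preserves this and only deletes roots. A root `c` that survives two phases must
have absorbed another root in the first one: otherwise, if the component holds a second class,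
some neighbour `b` of the class of `c` is lowered to `R' b < c` in the first phase, and then `c`
is lowered in the second. The absorbed roots are distinct and are no longer roots, so the
number `r_k` of roots of `R_k` in a component satisfies `2 r_{k+2} ≤ r_k` while `r_{k+2} ≥ 2`.
A spanning tree gives `r_0 = |C| ≤ |E(C)| + 1 ≤ N + 1`, so `r_k = 1` once
`k ≥ 2 ⌈log₂(N + 1)⌉`.
-/

open Finset

theorem Function.iterate_card_isFixedPt_of_le {α : Type*} [Fintype α] [LinearOrder α]
    {f : α → α} (hf : ∀ x, f x ≤ x) (x : α) : Function.IsFixedPt f (f^[Fintype.card α] x) := by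
  have hanti : Antitone fun m => f^[m] x :=
    antitone_nat_of_succ_le fun m => by rw [Function.iterate_succ_apply']; exact hf _
  obtain ⟨i, j, hij, heq⟩ := Fintype.exists_ne_map_eq_of_card_lt
    (fun m : Fin (Fintype.card α + 1) => f^[m] x) (by simp)
  wlog hlt : i < j generalizing i j
  · exact this j i hij.symm heq.symm (lt_of_le_of_ne (not_lt.mp hlt) hij.symm)
  have hfix : f (f^[i] x) = f^[i] x := by
    rw [← Function.iterate_succ_apply' f]
    exact le_antisymm (hanti (Nat.le_succ _)) (heq ▸ hanti (Nat.succ_le_of_lt hlt))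
  obtain ⟨m, hm⟩ := Nat.exists_eq_add_of_le' (Nat.le_of_lt_succ i.isLt)
  rw [hm, Function.iterate_add_apply, Function.iterate_fixed hfix]
  exact hfix

theorem Nat.le_one_of_two_mul_le_of_antitone {r : ℕ → ℕ} {N : ℕ} (hr : Antitone r)
    (h0 : r 0 ≤ N + 1) (hhalf : ∀ k, 2 ≤ r (k + 2) → 2 * r (k + 2) ≤ r k) :
    ∀ k, 2 * Nat.clog 2 (N + 1) ≤ k → r k ≤ 1 := by
  have key : ∀ t, 2 ≤ r (2 * t) → 2 ^ t * r (2 * t) ≤ N + 1 := by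
    intro t
    induction t with
    | zero => simpa using fun _ => h0
    | succ t ih =>
      intro h2
      calc 2 ^ (t + 1) * r (2 * (t + 1)) = 2 ^ t * (2 * r (2 * t + 2)) := by ring_nf
        _ ≤ 2 ^ t * r (2 * t) := Nat.mul_le_mul_left _ (hhalf (2 * t) h2)
        _ ≤ N + 1 := ih (h2.trans (hr (by omega)))
  intro k hk
  refine (hr hk).trans (not_lt.mp fun h2 => ?_)
  have hpow : N + 1 ≤ 2 ^ Nat.clog 2 (N + 1) := Nat.le_pow_clog one_lt_two _
  have := key _ h2
  have : 0 < 2 ^ Nat.clog 2 (N + 1) := by positivity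
  nlinarith

open scoped Classical in
theorem SimpleGraph.ConnectedComponent.card_le_card_edges_add_one {V : Type*} [Fintype V]
    [DecidableEq V] {G : SimpleGraph V} [DecidableRel G.Adj] (C : G.ConnectedComponent) :
    Nat.card C ≤ #{e ∈ G.edgeFinset | ∀ x ∈ e, G.connectedComponentMk x = C} + 1 := by
  refine C.connected_toSimpleGraph.card_vert_le_card_edgeSet_add_one.trans
    (Nat.add_le_add_right ?_ 1)
  rw [Nat.card_eq_fintype_card, ← SimpleGraph.edgeFinset_card]
  refine card_le_card_of_injOn (Sym2.map Subtype.val) (fun e he => ?_)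
    (Sym2.map.injective Subtype.val_injective).injOn
  induction e using Sym2.ind with
  | h x y =>
    simp only [coe_filter, mem_coe, SimpleGraph.mem_edgeFinset, SimpleGraph.mem_edgeSet,
      Sym2.map_mk] at he ⊢
    refine ⟨he, fun z hz => ?_⟩
    rcases Sym2.mem_iff.mp hz with rfl | rfl
    exacts [x.2, y.2]

namespace MinLabel

variable {V : Type*} [Fintype V] [LinearOrder V] {G : SimpleGraph V} {R : V → V}

structure IsRepMap (G : SimpleGraph V) (R : V → V) : Prop where
  idem : ∀ v, R (R v) = R v
  le : ∀ v, R v ≤ v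
  reachable : ∀ v, G.Reachable (R v) v

theorem upd_le (R : V → V) (v : V) : upd G R v ≤ R v :=
  min'_le _ _ (mem_insert_self _ _)

theorem upd_le_of_adj (R : V → V) {v a b : V} (hab : G.Adj a b) (ha : R a = R v) :
    upd G R v ≤ R b := by
  refine min'_le _ _ (mem_insert_of_mem (mem_image_of_mem R ?_))
  simpa using ⟨a, hab, ha⟩

theorem upd_eq_or_exists_adj (R : V → V) (v : V) :
    upd G R v = R v ∨ ∃ a b, G.Adj a b ∧ R a = R v ∧ upd G R v = R b := by
  classical
  have h := min'_mem _ (insert_nonempty (R v)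
    (({b | ∃ a, G.Adj a b ∧ R a = R v} : Finset V).image R))
  simp only [mem_insert, mem_image, mem_filter, mem_univ, true_and] at h
  rcases h with h | ⟨b, ⟨a, hab, ha⟩, hb⟩
  · exact .inl h
  · exact .inr ⟨a, b, hab, ha, hb.symm⟩

theorem upd_apply_self (hR : ∀ v, R (R v) = R v) (v : V) : upd G R (R v) = upd G R v := by
  unfold upd
  congr! 1
  ext
  simp only [mem_insert, mem_image, mem_filter, mem_univ, true_and, hR]

variable (G) in
noncomputable def phase (R : V → V) : V → V :=
  (upd G R)^[Fintype.card V]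

namespace IsRepMap

variable (hR : IsRepMap G R)
include hR

theorem upd_le_self (v : V) : upd G R v ≤ v :=
  (upd_le R v).trans (hR.le v)

theorem reachable_upd (v : V) : G.Reachable (upd G R v) v := by
  rcases upd_eq_or_exists_adj (G := G) R v with h | ⟨a, b, hab, ha, h⟩
  · exact h ▸ hR.reachable v
  · rw [h]
    exact (hR.reachable b).trans <| hab.reachable.symm.trans <|
      (hR.reachable a).symm.trans (ha ▸ hR.reachable v)

theorem reachable_iterate_upd (m : ℕ) (v : V) : G.Reachable ((upd G R)^[m] v) v := by
  induction m with
  | zero => rfl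
  | succ m ih =>
    rw [Function.iterate_succ_apply']
    exact (hR.reachable_upd _).trans ih

theorem antitone_iterate_upd (v : V) : Antitone fun m => (upd G R)^[m] v :=
  antitone_nat_of_succ_le fun m => by
    rw [Function.iterate_succ_apply']
    exact hR.upd_le_self _

theorem upd_phase (v : V) : upd G R (phase G R v) = phase G R v :=
  Function.iterate_card_isFixedPt_of_le hR.upd_le_self v

variable [Nonempty V]

theorem phase_le_upd (v : V) : phase G R v ≤ upd G R v :=
  hR.antitone_iterate_upd v Fintype.card_pos

theorem phase_apply_self (v : V) : phase G R (R v) = phase G R v := by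
  obtain ⟨m, hm⟩ := Nat.exists_eq_succ_of_ne_zero (Fintype.card_ne_zero (α := V))
  simp only [phase, hm, Function.iterate_succ_apply, upd_apply_self hR.idem]

theorem upd_eq_and_eq_of_phase_eq {c : V} (hc : phase G R c = c) : upd G R c = c ∧ R c = c := by
  have hle : c ≤ upd G R c := hc.symm.le.trans (hR.phase_le_upd c)
  exact ⟨le_antisymm (hR.upd_le_self c) hle, le_antisymm (hR.le c) (hle.trans (upd_le R c))⟩

end IsRepMap

theorem isRepMap_phase (hR : IsRepMap G R) : IsRepMap G (phase G R) where
  idem v := Function.iterate_fixed (hR.upd_phase v) _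
  le v := hR.antitone_iterate_upd v (Nat.zero_le _)
  reachable v := hR.reachable_iterate_upd _ v

variable (G) in
theorem isRepMap_Rseq : ∀ k, IsRepMap G (Rseq G k)
  | 0 => ⟨fun _ => rfl, fun _ => le_rfl, fun _ => .rfl⟩
  | k + 1 => isRepMap_phase (isRepMap_Rseq k)

open scoped Classical in
variable (G) in
noncomputable def roots (R : V → V) (w : V) : Finset V :=
  {c | R c = c ∧ G.Reachable c w}

@[simp]
theorem mem_roots {c w : V} : c ∈ roots G R w ↔ R c = c ∧ G.Reachable c w := by
  simp [roots]

open scoped Classical in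
theorem card_roots_id_le (w : V) : #(roots G id w) ≤ Nmax G + 1 := by
  set C := G.connectedComponentMk w
  have hroots : #(roots G id w) = Nat.card C := by
    rw [Nat.card_eq_fintype_card, Fintype.card_subtype]
    congr 1
    ext u
    simp only [mem_filter, mem_univ, true_and, mem_roots, id]
    exact SimpleGraph.ConnectedComponent.eq.symm
  have hN : #{e ∈ G.edgeFinset | ∀ x ∈ e, G.connectedComponentMk x = C} ≤ Nmax G :=
    le_sup (f := fun c : G.ConnectedComponent =>
      #{e ∈ G.edgeFinset | ∀ x ∈ e, G.connectedComponentMk x = c}) (mem_univ C)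
  have := C.card_le_card_edges_add_one
  omega

open scoped Classical in
theorem reachable_rho (v : V) : G.Reachable (rho G v) v :=
  (mem_filter.mp (min'_mem (univ.filter fun w => G.Reachable w v) _)).2

open scoped Classical in
theorem rho_le_of_reachable {u v : V} (h : G.Reachable u v) : rho G v ≤ u :=
  min'_le (univ.filter fun w => G.Reachable w v) _ (mem_filter.mpr ⟨mem_univ _, h⟩)

namespace IsRepMap

variable (hR : IsRepMap G R)
include hR

theorem eq_rho_of_card_roots_le_one (v : V) (h : #(roots G R v) ≤ 1) : R v = rho G v := by
  have hrho : G.Reachable (rho G v) v := reachable_rho v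
  have hroot : R (rho G v) = R v := card_le_one.mp h _
    (mem_roots.mpr ⟨hR.idem _, (hR.reachable _).trans hrho⟩) _
    (mem_roots.mpr ⟨hR.idem v, hR.reachable v⟩)
  exact le_antisymm (hroot ▸ hR.le _) (rho_le_of_reachable (hR.reachable v))

variable [Nonempty V]

theorem roots_phase_subset (w : V) : roots G (phase G R) w ⊆ roots G R w := fun c hc => by
  rw [mem_roots] at hc ⊢
  exact ⟨(hR.upd_eq_and_eq_of_phase_eq hc.1).2, hc.2⟩

theorem exists_absorbed {c a b : V} (hc : phase G (phase G R) c = c) (hab : G.Adj a b)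
    (ha : phase G R a = c) (hb : phase G R b ≠ c) :
    ∃ x, R x = x ∧ x ≠ c ∧ phase G R x = c := by
  by_contra! hcon
  obtain ⟨hupd, hfix⟩ := (isRepMap_phase hR).upd_eq_and_eq_of_phase_eq hc
  have hRa : R a = c := by
    by_contra hne
    exact hcon (R a) (hR.idem a) hne ((hR.phase_apply_self a).trans ha)
  have hlt : c < phase G R b :=
    lt_of_le_of_ne (hupd ▸ upd_le_of_adj _ hab (ha.trans hfix.symm)) (Ne.symm hb)
  have hle : phase G R b ≤ c :=
    (hR.phase_le_upd b).trans (hRa ▸ upd_le_of_adj R hab.symm rfl)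
  exact hlt.not_ge hle

theorem two_mul_card_roots_phase_phase_le (w : V)
    (h2 : 2 ≤ #(roots G (phase G (phase G R)) w)) :
    2 * #(roots G (phase G (phase G R)) w) ≤ #(roots G R w) := by
  set R' := phase G R
  have hR' : IsRepMap G R' := isRepMap_phase hR
  have key : ∀ c ∈ roots G (phase G R') w, ∃ x, R x = x ∧ x ≠ c ∧ R' x = c := by
    intro c hc
    obtain ⟨c', hc', hne⟩ := exists_mem_ne h2 c
    obtain ⟨hcfix, hcw⟩ := mem_roots.mp hc
    obtain ⟨hc'fix, hc'w⟩ := mem_roots.mp hc'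
    obtain ⟨p⟩ := hcw.trans hc'w.symm
    obtain ⟨d, -, hd₁, hd₂⟩ := p.exists_boundary_dart {x | R' x = c}
      (hR'.upd_eq_and_eq_of_phase_eq hcfix).2
      (fun h => hne ((hR'.upd_eq_and_eq_of_phase_eq hc'fix).2.symm.trans h))
    exact hR.exists_absorbed hcfix d.adj hd₁ hd₂
  choose! f hf using key
  have hinj : #(roots G (phase G R') w) ≤ #(roots G R w \ roots G R' w) := by
    refine card_le_card_of_injOn f (fun c hc => ?_) (fun c₁ h₁ c₂ h₂ he => ?_)
    · obtain ⟨hfix, hne, hfc⟩ := hf c hc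
      have hreach := hR'.reachable (f c)
      rw [hfc] at hreach
      simp only [coe_sdiff, Set.mem_sdiff, mem_coe, mem_roots]
      exact ⟨⟨hfix, hreach.symm.trans (mem_roots.mp hc).2⟩, fun h => hne (h.1.symm.trans hfc)⟩
    · exact (hf c₁ h₁).2.2.symm.trans (he ▸ (hf c₂ h₂).2.2)
  have hsub : roots G R' w ⊆ roots G R w := hR.roots_phase_subset w
  rw [card_sdiff_of_subset hsub] at hinj
  have := card_le_card (hR'.roots_phase_subset w)
  omega

end IsRepMap

end MinLabel

open MinLabel in
theorem stmt6 {V : Type*} [Fintype V] [Nonempty V] [LinearOrder V] (G : SimpleGraph V) :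
    ∀ k : ℕ, 2 * Nat.clog 2 (Nmax G + 1) ≤ k → Rseq G k = rho G := by
  intro k hk
  funext v
  refine (isRepMap_Rseq G k).eq_rho_of_card_roots_le_one v ?_
  refine Nat.le_one_of_two_mul_le_of_antitone (r := fun j => #(roots G (Rseq G j) v))
    ?_ (card_roots_id_le v) ?_ k hk
  · exact antitone_nat_of_succ_le fun j => card_le_card ((isRepMap_Rseq G j).roots_phase_subset v)
  · exact fun j => (isRepMap_Rseq G j).two_mul_card_roots_phase_phase_le v
end

section
/- Let α be a linearly ordered type, let N ≥ 1 be a natural number, and let f : α → α satisfy f(x) ≤ x for every x, and suppose the range of f is finite with at most N elements. Then f ∘ f^[N] = f^[N]; that is, iterating f converges to a fixed point after at most N steps, where N is the number of values (pieces) of f. -/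
/-!
The orbit `x, f x, f² x, …` is antitone because `f x ≤ x`, and from the first step on it lives in
the range of `f`, which has at most `N` points. By pigeonhole two of `f x, …, f^[N+1] x` coincide,
and an antitone sequence that returns to a value is constant in between; so some `f^[k] x` with
`1 ≤ k ≤ N` is a fixed point of `f`, and the orbit stays there, in particular at step `N`.
-/

theorem Antitone.exists_lt_succ_eq_of_mapsTo {α : Type*} [PartialOrder α] {u : ℕ → α}
    (hu : Antitone u) {s : Finset α} {m : ℕ} (hs : ∀ k < m + 1, u k ∈ s) (hcard : s.card ≤ m) :
    ∃ k < m, u (k + 1) = u k := by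
  obtain ⟨i, hi, j, hj, hij, heq⟩ :=
    Finset.exists_ne_map_eq_of_card_lt_of_maps_to (s := Finset.range (m + 1)) (t := s)
      (by simpa using Nat.lt_succ_of_le hcard) (fun k hk => hs k (Finset.mem_range.1 hk))
  rw [Finset.mem_range] at hi hj
  wlog hlt : i < j generalizing i j
  · exact this j hj i hi hij.symm heq.symm (lt_of_le_of_ne (not_lt.1 hlt) hij.symm)
  refine ⟨i, by omega, le_antisymm (hu (Nat.le_succ i)) ?_⟩
  calc u i = u j := heq
    _ ≤ u (i + 1) := hu hlt

theorem Function.iterate_eq_of_isFixedPt {α : Type*} {f : α → α} {x : α} {k n : ℕ}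
    (hfix : Function.IsFixedPt f (f^[k] x)) (hkn : k ≤ n) : f^[n] x = f^[k] x := by
  rw [← Nat.sub_add_cancel hkn, Function.iterate_add_apply, hfix.iterate]

theorem stmt9_general {α : Type*} [LinearOrder α] (N : ℕ)
    (f : α → α) (hle : ∀ x, f x ≤ x)
    (hfin : (Set.range f).Finite) (hcard : hfin.toFinset.card ≤ N) :
    f ∘ f^[N] = f^[N] := by
  funext x
  have horbit : Antitone (fun k => f^[k + 1] x) :=
    antitone_nat_of_succ_le fun k => by
      simpa only [Function.iterate_succ_apply'] using hle (f^[k + 1] x)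
  obtain ⟨k, hk, hstep⟩ := horbit.exists_lt_succ_eq_of_mapsTo (s := hfin.toFinset)
    (fun k _ => by simp [Function.iterate_succ_apply']) hcard
  have hfix : Function.IsFixedPt f (f^[k + 1] x) := by
    simpa only [Function.IsFixedPt, ← Function.iterate_succ_apply' f] using hstep
  show f (f^[N] x) = f^[N] x
  rw [Function.iterate_eq_of_isFixedPt hfix hk]
  exact hfix

theorem stmt9 {α : Type*} [LinearOrder α] (N : ℕ) (hN : 1 ≤ N)
    (f : α → α) (hle : ∀ x, f x ≤ x)
    (hfin : (Set.range f).Finite) (hcard : hfin.toFinset.card ≤ N) :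
    f ∘ f^[N] = f^[N] :=
  stmt9_general N f hle hfin hcard
end
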